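/- For every z in the open first quadrant with |z| > 1, F(z) = (i−1)/2 + (2/π)·Σ_{n=0}^∞ 1/((4n+1)·z^(4n+1)), where F(z) := (1/(2π))·(Log((1+z)/(1−z)) + i·Log((1+iz)/(1−iz))); in particular the series converges for such z. -/

import Mathlib

open Complex

/-- `F(z) = (1/(2π))·(Log((1+z)/(1−z)) + i·Log((1+iz)/(1−iz)))`. -/
noncomputable def F (z : ℂ) : ℂ :=
  (1 / (2 * (Real.pi : ℂ))) *
    (Complex.log ((1 + z) / (1 - z)) + Complex.I * Complex.log ((1 + Complex.I * z) / (1 - Complex.I * z)))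

/-! With `w = z⁻¹` (so `‖w‖ < 1`, `Re w > 0`, `Im w < 0`), `(1 + z)/(1 - z) = -(1 + w)/(1 - w)`, and
since `Im w < 0` the principal logarithm of this is `log (1 + w) - log (1 - w) + πi`; the same holds
for `iz`, whose inverse is `-iw`. Hence `2π F(z) - πi + π` is
`log (1 + w) - log (1 - w) + i (log (1 - iw) - log (1 + iw)) = ∑ₙ (1 - (-1)ⁿ + i(-i)ⁿ - i iⁿ) wⁿ/n`,
and the coefficient is the fourth-roots-of-unity filter `∑_{ζ⁴ = 1} ζⁿ⁻¹`, which is `4` for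
`n ≡ 1 mod 4` and `0` otherwise. -/

open scoped Real

namespace Complex

lemma log_neg_div_one_sub_of_im_neg {v : ℂ} (hv : v.im < 0) :
    log (-((1 + v) / (1 - v))) = log (1 + v) - log (1 - v) + π * I := by
  have hplus : (1 + v).arg < 0 := arg_neg_iff.mpr (by simpa using hv)
  have hminus : 0 < (1 - v).arg :=
    (arg_nonneg_iff.mpr (by simp; linarith)).lt_of_ne' fun h => by
      simpa [hv.ne] using arg_eq_zero_iff.mp h
  have hplus_ne : 1 + v ≠ 0 := fun h => by simp [h] at hplus
  have hminus_ne : 1 - v ≠ 0 := fun h => by simp [h] at hminus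
  have hexp : -((1 + v) / (1 - v)) = exp (log (1 + v) - log (1 - v) + π * I) := by
    rw [exp_add, exp_sub, exp_log hplus_ne, exp_log hminus_ne, exp_pi_mul_I]
    ring
  have him : (log (1 + v) - log (1 - v) + π * I).im = (1 + v).arg - (1 - v).arg + π := by
    simp [log_im]
  rw [hexp, log_exp] <;> rw [him] <;> linarith [neg_pi_lt_arg (1 + v), arg_le_pi (1 - v)]

lemma log_div_one_sub_of_im_pos {z : ℂ} (hz : 0 < z.im) :
    log ((1 + z) / (1 - z)) = log (1 + z⁻¹) - log (1 - z⁻¹) + π * I := by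
  have hz0 : z ≠ 0 := fun h => by simp [h] at hz
  have hz1 : z - 1 ≠ 0 := fun h => by simp [sub_eq_zero.mp h] at hz
  have hinv : z⁻¹.im < 0 := by
    rw [inv_im, neg_div]
    exact neg_neg_of_pos (div_pos hz (normSq_pos.mpr hz0))
  rw [← log_neg_div_one_sub_of_im_neg hinv]
  congr 1
  field_simp
  rw [← neg_sub z 1]
  field_simp
  ring

lemma one_sub_neg_one_pow_add_I_mul_neg_I_pow_sub_I_mul_I_pow (n : ℕ) :
    1 - (-1) ^ n + I * (-I) ^ n - I * I ^ n = if n % 4 = 1 then (4 : ℂ) else 0 := by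
  have hmod : ∀ ζ : ℂ, ζ ^ 4 = 1 → ζ ^ n = ζ ^ (n % 4) := fun ζ hζ => by
    conv_lhs => rw [← Nat.div_add_mod n 4, pow_add, pow_mul, hζ, one_pow, one_mul]
  rw [hmod (-1) (by norm_num), hmod (-I) (by rw [neg_pow, I_pow_four]; norm_num), hmod I I_pow_four]
  have : n % 4 < 4 := Nat.mod_lt _ (by norm_num)
  interval_cases n % 4 <;> norm_num [pow_succ, I_mul_I]

lemma hasSum_four_mul_pow_div_of_norm_lt_one {w : ℂ} (hw : ‖w‖ < 1) :
    HasSum (fun n : ℕ => 4 * (w ^ (4 * n + 1) / (4 * n + 1 : ℕ)))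
      (log (1 + w) - log (1 - w) + I * (log (1 - I * w) - log (1 + I * w))) := by
  have hlog (ζ : ℂ) (hζ : ‖ζ‖ = 1) :
      HasSum (fun n : ℕ => ζ ^ n * (w ^ n / n)) (-log (1 - ζ * w)) := by
    simpa [mul_pow, mul_div_assoc] using hasSum_taylorSeries_neg_log (z := ζ * w) (by simpa [hζ])
  have hfilter : HasSum (fun n : ℕ => (if n % 4 = 1 then (4 : ℂ) else 0) * (w ^ n / n))
      (log (1 + w) - log (1 - w) + I * (log (1 - I * w) - log (1 + I * w))) := by
    have hsum := ((hlog 1 (by simp)).sub (hlog (-1) (by simp))).add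
      (((hlog (-I) (by simp)).sub (hlog I (by simp))).mul_left I)
    have hval : -log (1 - 1 * w) - -log (1 - -1 * w) + I * (-log (1 - -I * w) - -log (1 - I * w)) =
        log (1 + w) - log (1 - w) + I * (log (1 - I * w) - log (1 + I * w)) := by
      simp only [one_mul, neg_mul, sub_neg_eq_add]
      ring
    rw [← hval]
    refine hsum.congr_fun fun n => ?_
    rw [← one_sub_neg_one_pow_add_I_mul_neg_I_pow_sub_I_mul_I_pow]
    ring
  have hinj : Function.Injective (fun n : ℕ => 4 * n + 1) := fun a b h => by simpa using h
  refine (hinj.hasSum_iff fun n hn => ?_).mpr hfilter |>.congr_fun fun n => ?_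
  · rw [if_neg fun h => hn ⟨n / 4, by dsimp only; omega⟩, zero_mul]
  · simp

end Complex

lemma F_sub_eq_of_re_pos_of_im_pos {z : ℂ} (hre : 0 < z.re) (him : 0 < z.im) :
    F z - (I - 1) / 2 = 1 / (2 * π) *
      (log (1 + z⁻¹) - log (1 - z⁻¹) + I * (log (1 - I * z⁻¹) - log (1 + I * z⁻¹))) := by
  have hIz : 0 < (I * z).im := by simpa using hre
  have hinv : (I * z)⁻¹ = -(I * z⁻¹) := by rw [mul_inv, inv_I, neg_mul]
  rw [F, log_div_one_sub_of_im_pos him, log_div_one_sub_of_im_pos hIz, hinv, sub_neg_eq_add,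
    ← sub_eq_add_neg]
  field_simp
  linear_combination (π : ℂ) * I_mul_I

/-- For `z` in the open first quadrant with `|z| > 1`,
`F(z) = (i−1)/2 + (2/π)·Σ_{n=0}^∞ 1/((4n+1)·z^(4n+1))`, the series converging. -/
theorem F_hasSum_of_first_quadrant_norm_gt_one (z : ℂ)
    (hre : 0 < z.re) (him : 0 < z.im) (hz : 1 < ‖z‖) :
    HasSum (fun n : ℕ => (2 / (Real.pi : ℂ)) * (1 / (((4 * n + 1 : ℕ) : ℂ) * z ^ (4 * n + 1))))
      (F z - (Complex.I - 1) / 2) := by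
  have hw : ‖z⁻¹‖ < 1 := by rw [norm_inv]; exact inv_lt_one_of_one_lt₀ hz
  rw [F_sub_eq_of_re_pos_of_im_pos hre him]
  refine ((hasSum_four_mul_pow_div_of_norm_lt_one hw).mul_left _).congr_fun fun n => ?_
  rw [inv_pow]
  field_simp
  ring
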